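/- Let A ⊆ ℝ^N be bounded and nondegenerate with D := dim_B(A) existing and 0 < M_*^D(A) ≤ M^{*D}(A) < ∞. If the tube zeta function ζ̃_A(s) = ∫_0^δ t^{s-N-1}|A_t| dt extends meromorphically to a neighborhood of s = D, then D is a simple pole of ζ̃_A and M_*^D(A) ≤ res(ζ̃_A, D) ≤ M^{*D}(A). In particular, if A is Minkowski measurable then res(ζ̃_A, D) = M^D(A). -/

import Mathlib

/-!
Write `g(t) = |A_t| / t^(N-D)`: the Minkowski contents are the `liminf` and `limsup` of `g` as
`t → 0⁺`, and for real `s = D + σ` the tube zeta function is the truncated Mellin integral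
`∫_0^δ t^(σ-1) g(t) dt`. Since `σ ∫_a^b t^(σ-1) dt = b^σ - a^σ`, which tends to `1` for `a = 0`
and to `0` for `a > 0`, an Abelian argument squeezes `σ ζ̃_A(D + σ)` between `liminf g` and
`limsup g` up to `o(1)` as `σ → 0⁺`. So `(s - D) F(s)` stays bounded along the real axis; a
meromorphic function bounded along some approach to a point has nonnegative order there, hence
`(s - D) F(s)` has a limit at `D`, which is real and lies between the two contents.
-/

open MeasureTheory Metric Filter Set Topology Complex

/-- Lower Minkowski content of a bounded set `A ⊆ ℝ^N` in dimension `D`. -/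
noncomputable def lowerMinkowskiContent (N : ℕ) (A : Set (EuclideanSpace ℝ (Fin N)))
    (r : ℝ) : ENNReal :=
  Filter.liminf
    (fun t : ℝ => volume (Metric.thickening t A) / ENNReal.ofReal (t ^ ((N : ℝ) - r)))
    (nhdsWithin 0 (Set.Ioi 0))

/-- Upper Minkowski content of a bounded set `A ⊆ ℝ^N` in dimension `D`. -/
noncomputable def upperMinkowskiContent (N : ℕ) (A : Set (EuclideanSpace ℝ (Fin N)))
    (r : ℝ) : ENNReal :=
  Filter.limsup
    (fun t : ℝ => volume (Metric.thickening t A) / ENNReal.ofReal (t ^ ((N : ℝ) - r)))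
    (nhdsWithin 0 (Set.Ioi 0))

/-- The tube zeta function `ζ̃_A(s) = ∫_0^δ t^{s-N-1} |A_t| dt`. -/
noncomputable def tubeZeta (N : ℕ) (A : Set (EuclideanSpace ℝ (Fin N))) (δ : ℝ)
    (s : ℂ) : ℂ :=
  ∫ t in Set.Ioo (0 : ℝ) δ,
    (t : ℂ) ^ (s - (N : ℂ) - 1) * ((volume (Metric.thickening t A)).toReal : ℂ)

open scoped ENNReal

lemma ofReal_mul_setLIntegral_Ioc_rpow_sub_one {σ a b : ℝ} (hσ : 0 < σ) (ha : 0 ≤ a)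
    (hab : a ≤ b) :
    ENNReal.ofReal σ * ∫⁻ t in Ioc a b, ENNReal.ofReal (t ^ (σ - 1)) =
      ENNReal.ofReal (b ^ σ - a ^ σ) := by
  have hint : IntervalIntegrable (fun t : ℝ => t ^ (σ - 1)) volume a b :=
    intervalIntegral.intervalIntegrable_rpow' (by linarith)
  rw [← ofReal_integral_eq_lintegral_ofReal
      ((intervalIntegrable_iff_integrableOn_Ioc_of_le hab).mp hint)
      ((ae_restrict_iff' measurableSet_Ioc).mpr
        (Eventually.of_forall fun t ht => Real.rpow_nonneg (ha.trans ht.1.le) _)),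
    ← intervalIntegral.integral_of_le hab, integral_rpow (Or.inl (by linarith)),
    sub_add_cancel, ← ENNReal.ofReal_mul hσ.le, mul_div_cancel₀ _ hσ.ne']

lemma ofReal_mul_setLIntegral_rpow_sub_one_mul_const {σ a b : ℝ} (hσ : 0 < σ) (ha : 0 ≤ a)
    (hab : a ≤ b) (c : ℝ≥0∞) {s : Set ℝ} (hs : s =ᵐ[volume] Ioc a b) :
    ENNReal.ofReal σ * ∫⁻ t in s, ENNReal.ofReal (t ^ (σ - 1)) * c =
      c * ENNReal.ofReal (b ^ σ - a ^ σ) := by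
  rw [lintegral_mul_const _ (by fun_prop), setLIntegral_congr hs, ← mul_assoc,
    ofReal_mul_setLIntegral_Ioc_rpow_sub_one hσ ha hab, mul_comm]

lemma tendsto_rpow_nhdsGT_zero {t : ℝ} (ht : t ≠ 0) :
    Tendsto (fun σ : ℝ => t ^ σ) (𝓝[>] 0) (𝓝 1) :=
  ((Real.continuous_const_rpow ht).tendsto' 0 1 (Real.rpow_zero t)).mono_left nhdsWithin_le_nhds

noncomputable def truncatedMellin (g : ℝ → ℝ≥0∞) (δ σ : ℝ) : ℝ≥0∞ :=
  ∫⁻ t in Ioo 0 δ, ENNReal.ofReal (t ^ (σ - 1)) * g t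

section Abelian

variable {g : ℝ → ℝ≥0∞} {δ : ℝ}

theorem liminf_le_liminf_ofReal_mul_truncatedMellin (hδ : 0 < δ) :
    liminf g (𝓝[>] 0) ≤ liminf (fun σ => ENNReal.ofReal σ * truncatedMellin g δ σ) (𝓝[>] 0) := by
  refine le_of_forall_lt_imp_le_of_dense fun c hc => ?_
  obtain ⟨u, hu, hgu⟩ := mem_nhdsGT_iff_exists_Ioo_subset.mp (eventually_lt_of_lt_liminf hc)
  set t₀ := min u δ
  have ht₀ : 0 < t₀ := lt_min hu hδ
  have hbound : ∀ σ > 0, c * ENNReal.ofReal (t₀ ^ σ) ≤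
      ENNReal.ofReal σ * truncatedMellin g δ σ := fun σ hσ =>
    calc c * ENNReal.ofReal (t₀ ^ σ)
        = ENNReal.ofReal σ * ∫⁻ t in Ioo 0 t₀, ENNReal.ofReal (t ^ (σ - 1)) * c := by
          rw [ofReal_mul_setLIntegral_rpow_sub_one_mul_const hσ le_rfl ht₀.le c Ioo_ae_eq_Ioc,
            Real.zero_rpow hσ.ne', sub_zero]
      _ ≤ ENNReal.ofReal σ * ∫⁻ t in Ioo 0 t₀, ENNReal.ofReal (t ^ (σ - 1)) * g t := by
          gcongr ENNReal.ofReal σ * ?_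
          refine setLIntegral_mono' measurableSet_Ioo fun t ht => ?_
          gcongr
          exact (hgu ⟨ht.1, ht.2.trans_le (min_le_left u δ)⟩).le
      _ ≤ ENNReal.ofReal σ * truncatedMellin g δ σ := by
          gcongr
          exact lintegral_mono_set (Ioo_subset_Ioo_right (min_le_right u δ))
  have hlim : Tendsto (fun σ : ℝ => c * ENNReal.ofReal (t₀ ^ σ)) (𝓝[>] 0) (𝓝 c) := by
    simpa using ENNReal.Tendsto.const_mul
      (ENNReal.tendsto_ofReal (tendsto_rpow_nhdsGT_zero ht₀.ne')) (Or.inl (by simp))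
  calc c = liminf (fun σ : ℝ => c * ENNReal.ofReal (t₀ ^ σ)) (𝓝[>] 0) := hlim.liminf_eq.symm
    _ ≤ _ := liminf_le_liminf (eventually_mem_nhdsWithin.mono hbound)

theorem limsup_ofReal_mul_truncatedMellin_le (hδ : 0 < δ) {K : ℝ≥0∞} (hK : K ≠ ⊤)
    (hgK : ∀ t ∈ Ioo 0 δ, g t ≤ K) :
    limsup (fun σ => ENNReal.ofReal σ * truncatedMellin g δ σ) (𝓝[>] 0) ≤ limsup g (𝓝[>] 0) := by
  refine le_of_forall_gt_imp_ge_of_dense fun C hC => ?_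
  obtain ⟨u, hu, hgu⟩ := mem_nhdsGT_iff_exists_Ioo_subset.mp (eventually_lt_of_limsup_lt hC)
  set t₀ := min u δ
  have ht₀ : 0 < t₀ := lt_min hu hδ
  have ht₀δ : t₀ ≤ δ := min_le_right u δ
  have hbound : ∀ σ > 0, ENNReal.ofReal σ * truncatedMellin g δ σ ≤
      C * ENNReal.ofReal (t₀ ^ σ) + K * ENNReal.ofReal (δ ^ σ - t₀ ^ σ) := fun σ hσ =>
    calc ENNReal.ofReal σ * truncatedMellin g δ σ
        = ENNReal.ofReal σ * ∫⁻ t in Ioo 0 t₀ ∪ Ico t₀ δ, ENNReal.ofReal (t ^ (σ - 1)) * g t := by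
          rw [truncatedMellin, Ioo_union_Ico_eq_Ioo ht₀ ht₀δ]
      _ ≤ ENNReal.ofReal σ * ((∫⁻ t in Ioo 0 t₀, ENNReal.ofReal (t ^ (σ - 1)) * C) +
            ∫⁻ t in Ico t₀ δ, ENNReal.ofReal (t ^ (σ - 1)) * K) := by
          gcongr ENNReal.ofReal σ * ?_
          refine (lintegral_union_le _ _ _).trans (add_le_add ?_ ?_)
          · refine setLIntegral_mono' measurableSet_Ioo fun t ht => ?_
            gcongr
            exact (hgu ⟨ht.1, ht.2.trans_le (min_le_left u δ)⟩).le
          · refine setLIntegral_mono' measurableSet_Ico fun t ht => ?_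
            gcongr
            exact hgK t ⟨ht₀.trans_le ht.1, ht.2⟩
      _ = C * ENNReal.ofReal (t₀ ^ σ) + K * ENNReal.ofReal (δ ^ σ - t₀ ^ σ) := by
          rw [mul_add,
            ofReal_mul_setLIntegral_rpow_sub_one_mul_const hσ le_rfl ht₀.le C Ioo_ae_eq_Ioc,
            ofReal_mul_setLIntegral_rpow_sub_one_mul_const hσ ht₀.le ht₀δ K Ico_ae_eq_Ioc,
            Real.zero_rpow hσ.ne', sub_zero]
  have hlim : Tendsto (fun σ : ℝ => C * ENNReal.ofReal (t₀ ^ σ) +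
      K * ENNReal.ofReal (δ ^ σ - t₀ ^ σ)) (𝓝[>] 0) (𝓝 C) := by
    have h₁ := ENNReal.tendsto_ofReal (tendsto_rpow_nhdsGT_zero ht₀.ne')
    have h₂ := ENNReal.tendsto_ofReal
      ((tendsto_rpow_nhdsGT_zero hδ.ne').sub (tendsto_rpow_nhdsGT_zero ht₀.ne'))
    simpa using (ENNReal.Tendsto.const_mul h₁ (Or.inl (by simp))).add
      (ENNReal.Tendsto.const_mul h₂ (Or.inr hK))
  calc limsup (fun σ => ENNReal.ofReal σ * truncatedMellin g δ σ) (𝓝[>] 0)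
      ≤ limsup (fun σ : ℝ => C * ENNReal.ofReal (t₀ ^ σ) +
          K * ENNReal.ofReal (δ ^ σ - t₀ ^ σ)) (𝓝[>] 0) :=
        limsup_le_limsup (eventually_mem_nhdsWithin.mono hbound)
    _ = C := hlim.limsup_eq

end Abelian

noncomputable def minkowskiRatio (N : ℕ) (A : Set (EuclideanSpace ℝ (Fin N))) (D t : ℝ) : ℝ≥0∞ :=
  volume (thickening t A) / ENNReal.ofReal (t ^ ((N : ℝ) - D))

section Minkowski

variable {N : ℕ} {A : Set (EuclideanSpace ℝ (Fin N))}

lemma exists_minkowskiRatio_le (hAb : Bornology.IsBounded A) {D : ℝ}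
    (hup : upperMinkowskiContent N A D < ⊤) (δ : ℝ) :
    ∃ K ≠ ⊤, ∀ t ∈ Ioo 0 δ, minkowskiRatio N A D t ≤ K := by
  obtain ⟨C, hC, hCtop⟩ := exists_between hup
  obtain ⟨u, hu, hgu⟩ := mem_nhdsGT_iff_exists_Ioo_subset.mp (eventually_lt_of_limsup_lt hC)
  obtain ⟨M, hM⟩ := isCompact_Icc.exists_bound_of_continuousOn (f := fun t : ℝ => t ^ (D - N))
    fun t ht =>
      (Real.continuousAt_rpow_const _ _ (Or.inl (hu.trans_le ht.1).ne')).continuousWithinAt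
  refine ⟨C + volume (thickening δ A) * ENNReal.ofReal M, ENNReal.add_ne_top.2
    ⟨hCtop.ne, ENNReal.mul_ne_top hAb.thickening.measure_lt_top.ne ENNReal.ofReal_ne_top⟩,
    fun t ht => ?_⟩
  rcases lt_or_ge t u with htu | htu
  · exact (hgu ⟨ht.1, htu⟩).le.trans le_self_add
  calc minkowskiRatio N A D t = volume (thickening t A) * ENNReal.ofReal (t ^ (D - N)) := by
        rw [minkowskiRatio, div_eq_mul_inv,
          ← ENNReal.ofReal_inv_of_pos (Real.rpow_pos_of_pos ht.1 _), ← Real.rpow_neg ht.1.le,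
          neg_sub]
    _ ≤ volume (thickening δ A) * ENNReal.ofReal M := by
        gcongr
        · exact ht.2.le
        · exact (le_abs_self _).trans (hM t ⟨htu, ht.2.le⟩)
    _ ≤ _ := le_add_self

lemma tubeZeta_ofReal_add (hAb : Bornology.IsBounded A) (δ D σ : ℝ) :
    tubeZeta N A δ ((D + σ : ℝ) : ℂ) = (truncatedMellin (minkowskiRatio N A D) δ σ).toReal := by
  have hV : Measurable fun t : ℝ => volume (thickening t A) :=
    Monotone.measurable fun _ _ hst => measure_mono (thickening_mono hst A)
  have hpt : ∀ t ∈ Ioo 0 δ, (t : ℂ) ^ (((D + σ : ℝ) : ℂ) - N - 1) *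
      ((volume (thickening t A)).toReal : ℂ) =
      ((ENNReal.ofReal (t ^ (σ - 1)) * minkowskiRatio N A D t).toReal : ℂ) := by
    intro t ht
    rw [ENNReal.toReal_mul, minkowskiRatio, ENNReal.toReal_div,
      ENNReal.toReal_ofReal (Real.rpow_nonneg ht.1.le _),
      ENNReal.toReal_ofReal (Real.rpow_nonneg ht.1.le _),
      show ((D + σ : ℝ) : ℂ) - N - 1 = ((σ - 1 - (N - D) : ℝ) : ℂ) by push_cast; ring,
      ← Complex.ofReal_cpow ht.1.le, Real.rpow_sub ht.1]
    push_cast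
    ring
  have hfin : ∀ᵐ t ∂volume.restrict (Ioo 0 δ),
      ENNReal.ofReal (t ^ (σ - 1)) * minkowskiRatio N A D t < ⊤ :=
    ae_restrict_of_forall_mem measurableSet_Ioo fun t ht =>
      ENNReal.mul_lt_top ENNReal.ofReal_lt_top (ENNReal.div_ne_top
        hAb.thickening.measure_lt_top.ne (by simpa using Real.rpow_pos_of_pos ht.1 _)).lt_top
  rw [tubeZeta, setIntegral_congr_fun measurableSet_Ioo hpt, integral_complex_ofReal,
    integral_toReal (by unfold minkowskiRatio; fun_prop) hfin, truncatedMellin]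

end Minkowski

theorem MeromorphicAt.exists_tendsto_of_isBoundedUnder {𝕜 E : Type*} [NontriviallyNormedField 𝕜]
    [NormedAddCommGroup E] [NormedSpace 𝕜 E] {f : 𝕜 → E} {x : 𝕜} (hf : MeromorphicAt f x)
    {ι : Type*} {l : Filter ι} [l.NeBot] {φ : ι → 𝕜} (hφ : Tendsto φ l (𝓝[≠] x))
    (hb : IsBoundedUnder (· ≤ ·) l fun i => ‖f (φ i)‖) :
    ∃ c, Tendsto f (𝓝[≠] x) (𝓝 c) := by
  refine (tendsto_nhds_iff_meromorphicOrderAt_nonneg hf).2 (not_lt.1 fun ho => ?_)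
  exact not_isBoundedUnder_of_tendsto_atTop (tendsto_norm_atTop_iff_cobounded.2
    ((tendsto_cobounded_of_meromorphicOrderAt_neg ho).comp hφ)) hb

lemma tendsto_ofReal_add_nhdsGT_zero (D : ℝ) :
    Tendsto (fun σ : ℝ => ((D + σ : ℝ) : ℂ)) (𝓝[>] 0) (𝓝[≠] (D : ℂ)) := by
  refine tendsto_nhdsWithin_iff.2 ⟨?_, eventually_mem_nhdsWithin.mono fun σ hσ => ?_⟩
  · have hc : Continuous fun σ : ℝ => ((D + σ : ℝ) : ℂ) := by fun_prop
    simpa using (hc.tendsto 0).mono_left nhdsWithin_le_nhds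
  · simpa using hσ.ne'

lemma ENNReal.tendsto_ofReal_re_of_tendsto_toReal {α : Type*} {l : Filter α} [l.NeBot]
    {f : α → ℝ≥0∞} {w : ℂ} (hw : Tendsto (fun a => ((f a).toReal : ℂ)) l (𝓝 w))
    (hf : ∀ᶠ a in l, f a ≠ ⊤) :
    w = (w.re : ℂ) ∧ Tendsto f l (𝓝 (ENNReal.ofReal w.re)) := by
  have hre : Tendsto (fun a => (f a).toReal) l (𝓝 w.re) := by
    simpa [Function.comp_def] using (Complex.continuous_re.tendsto w).comp hw
  exact ⟨tendsto_nhds_unique hw ((Complex.continuous_ofReal.tendsto _).comp hre),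
    (ENNReal.tendsto_ofReal hre).congr' (hf.mono fun a ha => ENNReal.ofReal_toReal ha)⟩

theorem stmt_19_general (N : ℕ) (A : Set (EuclideanSpace ℝ (Fin N)))
    (hAb : Bornology.IsBounded A) (δ : ℝ) (hδ : 0 < δ) (D : ℝ)
    (hnd₁ : 0 < lowerMinkowskiContent N A D)
    (hnd₂ : upperMinkowskiContent N A D < ⊤)
    (F : ℂ → ℂ) (ε : ℝ) (hε : 0 < ε)
    (hFmer : MeromorphicAt F (D : ℂ))
    (hFeq : ∀ s ∈ Metric.ball (D : ℂ) ε, D < s.re → F s = tubeZeta N A δ s) :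
    ∃ r : ℝ, 0 < r ∧
      Filter.Tendsto (fun s : ℂ => (s - (D : ℂ)) * F s)
        (nhdsWithin (D : ℂ) {(D : ℂ)}ᶜ) (nhds (r : ℂ)) ∧
      lowerMinkowskiContent N A D ≤ ENNReal.ofReal r ∧
      ENNReal.ofReal r ≤ upperMinkowskiContent N A D ∧
      (lowerMinkowskiContent N A D = upperMinkowskiContent N A D →
        ENNReal.ofReal r = lowerMinkowskiContent N A D) := by
  set h : ℝ → ℝ≥0∞ := fun σ => ENNReal.ofReal σ * truncatedMellin (minkowskiRatio N A D) δ σ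
  obtain ⟨K, hK, hgK⟩ := exists_minkowskiRatio_le hAb hnd₂ δ
  have hlow : lowerMinkowskiContent N A D ≤ liminf h (𝓝[>] 0) :=
    liminf_le_liminf_ofReal_mul_truncatedMellin hδ
  have hup : limsup h (𝓝[>] 0) ≤ upperMinkowskiContent N A D :=
    limsup_ofReal_mul_truncatedMellin_le hδ hK hgK
  obtain ⟨C, hC, hCtop⟩ := exists_between (hup.trans_lt hnd₂)
  have hhC : ∀ᶠ σ in 𝓝[>] 0, h σ < C := eventually_lt_of_limsup_lt hC
  have hΦ : ∀ᶠ σ in 𝓝[>] (0 : ℝ), (((D + σ : ℝ) : ℂ) - D) * F (D + σ : ℝ) = (h σ).toReal := by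
    filter_upwards [Ioo_mem_nhdsGT hε] with σ hσ
    have hball : ((D + σ : ℝ) : ℂ) ∈ ball (D : ℂ) ε := by
      simpa [Complex.dist_eq, abs_of_pos hσ.1] using hσ.2
    rw [hFeq _ hball (by simpa using hσ.1), tubeZeta_ofReal_add hAb, ENNReal.toReal_mul,
      ENNReal.toReal_ofReal hσ.1.le]
    push_cast
    ring
  have hbdd : IsBoundedUnder (· ≤ ·) (𝓝[>] 0)
      fun σ : ℝ => ‖(((D + σ : ℝ) : ℂ) - D) * F (D + σ : ℝ)‖ := by
    refine isBoundedUnder_of_eventually_le (a := C.toReal) ?_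
    filter_upwards [hΦ, hhC] with σ hσΦ hσC
    rw [hσΦ, Complex.norm_real, Real.norm_of_nonneg ENNReal.toReal_nonneg]
    exact ENNReal.toReal_mono hCtop.ne hσC.le
  obtain ⟨w, hw⟩ := (by fun_prop : MeromorphicAt (fun s : ℂ => (s - D) * F s) D)
    |>.exists_tendsto_of_isBoundedUnder (tendsto_ofReal_add_nhdsGT_zero D) hbdd
  obtain ⟨hw_re, hlim⟩ := ENNReal.tendsto_ofReal_re_of_tendsto_toReal
    ((hw.comp (tendsto_ofReal_add_nhdsGT_zero D)).congr' hΦ)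
    (hhC.mono fun σ hσ => (hσ.trans hCtop).ne)
  rw [hlim.liminf_eq] at hlow
  rw [hlim.limsup_eq] at hup
  exact ⟨w.re, ENNReal.ofReal_pos.1 (hnd₁.trans_le hlow), hw_re ▸ hw, hlow, hup,
    fun hmeas => le_antisymm (hmeas ▸ hup) hlow⟩

/-- If `A` is Minkowski nondegenerate of dimension `D` and the tube zeta function
extends meromorphically to a neighborhood of `s = D`, then `D` is a simple pole of the
extension with residue `r` satisfying `M_*^D(A) ≤ r ≤ M^{*D}(A)`; in particular, if `A`
is Minkowski measurable, the residue equals the Minkowski content `M^D(A)`. -/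
theorem stmt_19 (N : ℕ) (A : Set (EuclideanSpace ℝ (Fin N))) (hA : A.Nonempty)
    (hAb : Bornology.IsBounded A) (δ : ℝ) (hδ : 0 < δ) (D : ℝ)
    (hnd₁ : 0 < lowerMinkowskiContent N A D)
    (hnd₂ : upperMinkowskiContent N A D < ⊤)
    (F : ℂ → ℂ) (ε : ℝ) (hε : 0 < ε)
    (hFhol : DifferentiableOn ℂ F (Metric.ball (D : ℂ) ε \ {(D : ℂ)}))
    (hFmer : MeromorphicAt F (D : ℂ))
    (hFeq : ∀ s ∈ Metric.ball (D : ℂ) ε, D < s.re → F s = tubeZeta N A δ s) :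
    ∃ r : ℝ, 0 < r ∧
      Filter.Tendsto (fun s : ℂ => (s - (D : ℂ)) * F s)
        (nhdsWithin (D : ℂ) {(D : ℂ)}ᶜ) (nhds (r : ℂ)) ∧
      lowerMinkowskiContent N A D ≤ ENNReal.ofReal r ∧
      ENNReal.ofReal r ≤ upperMinkowskiContent N A D ∧
      (lowerMinkowskiContent N A D = upperMinkowskiContent N A D →
        ENNReal.ofReal r = lowerMinkowskiContent N A D) :=
  stmt_19_general N A hAb δ hδ D hnd₁ hnd₂ F ε hε hFmer hFeq
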